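/- There exists a constant C > 0 such that for every three-times continuously differentiable function f : ℝ → ℝ whose third derivative is bounded, with M := sup_x |f'''(x)|, and for all integers j ≥ 0, k ∈ ℤ, the details of the third-order prediction applied to the dyadic cell averages of f satisfy |f_{j+1,2k} − f̂_{j+1,2k}| ≤ C · M · 2^{−3j} and |f_{j+1,2k+1} − f̂_{j+1,2k+1}| ≤ C · M · 2^{−3j}, where f̂_{j+1,·} is the third-order prediction computed from the coarse cell averages (f_{j,k})_k. -/

import Mathlib

/-!
The prediction reproduces the cell averages of quadratic polynomials exactly, so the details of `f`
are those of its Taylor remainder of order three around the coarse cell, which is bounded by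
`M |x - c|³` on the five cells involved. Dilating `f` by `2^{-j}` reduces everything to the levels
`0` and `1`, turning the bound `M` on `f'''` into `M 2^{-3j}`.
-/

/-- The dyadic cell average of `f : ℝ → ℝ` over the cell `Ω_{j,k} = (2⁻ʲk, 2⁻ʲ(k+1))`. -/
noncomputable def cellAvg (f : ℝ → ℝ) (j : ℕ) (k : ℤ) : ℝ :=
  2 ^ j * ∫ x in ((2:ℝ) ^ (-(j:ℤ)) * k)..((2:ℝ) ^ (-(j:ℤ)) * (k + 1)), f x

open Set intervalIntegral
open scoped Nat

theorem abs_le_mul_pow_succ_of_hasDerivAt {g g' : ℝ → ℝ} {c K : ℝ} {n : ℕ}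
    (hg : ∀ s, HasDerivAt g (g' s) s) (hgc : g c = 0) (hg' : ∀ s, |g' s| ≤ K * |s - c| ^ n)
    (x : ℝ) : |g x| ≤ K * |x - c| ^ (n + 1) := by
  have hK : 0 ≤ K := by simpa using (abs_nonneg _).trans (hg' (c + 1))
  have hmvt := Convex.norm_image_sub_le_of_norm_hasDerivWithin_le (C := K * |x - c| ^ n)
    (fun s _ => (hg s).hasDerivWithinAt)
    (fun s hs => (hg' s).trans <| mul_le_mul_of_nonneg_left
      (pow_le_pow_left₀ (abs_nonneg _) (abs_sub_left_of_mem_uIcc hs) n) hK)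
    (convex_uIcc c x) left_mem_uIcc right_mem_uIcc
  simpa [hgc, pow_succ, mul_assoc] using hmvt

theorem hasDerivAt_sum_mul_pow_div_factorial (a : ℕ → ℝ) (c s : ℝ) (n : ℕ) :
    HasDerivAt (fun x => ∑ i ∈ Finset.range (n + 1), a i * (x - c) ^ i / i !)
      (∑ i ∈ Finset.range n, a (i + 1) * (s - c) ^ i / i !) s := by
  induction n with
  | zero => simpa using hasDerivAt_const s (a 0)
  | succ n ih =>
    have hterm : HasDerivAt (fun x => a (n + 1) * (x - c) ^ (n + 1) / (n + 1)!)
        (a (n + 1) * (s - c) ^ n / n !) s := by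
      refine ((((hasDerivAt_id' s).sub_const c).fun_pow (n + 1)).const_mul (a (n + 1)))
        |>.div_const ((n + 1)! : ℝ) |>.congr_deriv ?_
      rw [Nat.factorial_succ]
      push_cast
      field_simp
    simpa only [Finset.sum_range_succ _ (n + 1), Finset.sum_range_succ _ n] using
      ih.fun_add hterm

theorem abs_sub_taylor_le_mul_pow {n : ℕ} {f : ℝ → ℝ} {M : ℝ} (hf : ContDiff ℝ n f)
    (hM : ∀ x, |iteratedDeriv n f x| ≤ M) (c x : ℝ) :
    |f x - ∑ i ∈ Finset.range n, iteratedDeriv i f c * (x - c) ^ i / i !| ≤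
      M * |x - c| ^ n := by
  induction n generalizing f x with
  | zero => simpa using hM x
  | succ n ih =>
    have hf' : ContDiff ℝ ((n : WithTop ℕ∞) + 1) f := by exact_mod_cast hf
    have hM' : ∀ x, |iteratedDeriv n (deriv f) x| ≤ M := by
      simpa only [iteratedDeriv_succ'] using hM
    refine abs_le_mul_pow_succ_of_hasDerivAt
      (g := fun y => f y - ∑ i ∈ Finset.range (n + 1), iteratedDeriv i f c * (y - c) ^ i / i !)
      (fun s => ?_) (by simp [Finset.sum_range_succ'])
      (ih hf'.deriv' hM') x
    simpa only [iteratedDeriv_succ'] using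
      (hf'.differentiable (by simp) s).hasDerivAt.fun_sub
        (hasDerivAt_sum_mul_pow_div_factorial (iteratedDeriv · f c) c s n)

theorem cellAvg_sub {f g : ℝ → ℝ} (hf : Continuous f) (hg : Continuous g) (j : ℕ)
    (k : ℤ) :
    cellAvg (fun x => f x - g x) j k = cellAvg f j k - cellAvg g j k := by
  rw [cellAvg, cellAvg, cellAvg,
    integral_sub (hf.intervalIntegrable _ _) (hg.intervalIntegrable _ _), mul_sub]

theorem abs_cellAvg_le {g : ℝ → ℝ} {B : ℝ} {j : ℕ} {k : ℤ}
    (hB : ∀ x ∈ Icc ((2:ℝ) ^ (-(j:ℤ)) * k) ((2:ℝ) ^ (-(j:ℤ)) * (k + 1)), |g x| ≤ B) :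
    |cellAvg g j k| ≤ B := by
  have hh : (0:ℝ) < 2 ^ (-(j:ℤ)) := by positivity
  have hcell : (2:ℝ) ^ (-(j:ℤ)) * k ≤ 2 ^ (-(j:ℤ)) * (k + 1) := by nlinarith
  have hint := norm_integral_le_of_norm_le_const (f := g) (C := B)
    fun x hx => hB x (uIcc_of_le hcell ▸ uIoc_subset_uIcc hx)
  rw [Real.norm_eq_abs,
    show (2:ℝ) ^ (-(j:ℤ)) * (k + 1) - 2 ^ (-(j:ℤ)) * k = 2 ^ (-(j:ℤ)) by ring,
    abs_of_pos hh] at hint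
  calc |cellAvg g j k| ≤ 2 ^ j * (B * 2 ^ (-(j:ℤ))) := by
        rw [cellAvg, abs_mul, abs_of_pos (by positivity)]; gcongr
    _ = B := by rw [zpow_neg, zpow_natCast]; field_simp

theorem cellAvg_comp_two_zpow_mul (f : ℝ → ℝ) (j i : ℕ) (m : ℤ) :
    cellAvg (fun t => f (2 ^ (-(j:ℤ)) * t)) i m = cellAvg f (j + i) m := by
  have h2 : (2:ℝ) ^ (-(j:ℤ)) ≠ 0 := by positivity
  have hscale : (2:ℝ) ^ (-(j:ℤ)) * 2 ^ (-(i:ℤ)) = 2 ^ (-((j + i : ℕ) : ℤ)) := by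
    rw [← zpow_add₀ two_ne_zero]; push_cast; ring_nf
  simp only [cellAvg, integral_comp_mul_left _ h2, smul_eq_mul, ← mul_assoc, hscale]
  rw [zpow_neg, inv_inv, zpow_natCast, pow_add]
  ring

theorem integral_quadratic (a b e u v : ℝ) :
    ∫ x in u..v, (a + b * x + e * x ^ 2) =
      a * (v - u) + b * (v ^ 2 - u ^ 2) / 2 + e * (v ^ 3 - u ^ 3) / 3 := by
  have hint {g : ℝ → ℝ} (hg : Continuous g) : IntervalIntegrable g MeasureTheory.volume u v :=
    hg.intervalIntegrable u v
  rw [integral_add (hint (by fun_prop)) (hint (by fun_prop)),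
    integral_add (hint (by fun_prop)) (hint (by fun_prop)),
    integral_const, integral_const_mul, integral_const_mul, integral_id, integral_pow]
  simp only [smul_eq_mul]
  ring

theorem cellAvg_quadratic (a b e : ℝ) (j : ℕ) (k : ℤ) :
    cellAvg (fun x => a + b * x + e * x ^ 2) j k =
      a + b * 2 ^ (-(j:ℤ)) * (2 * k + 1) / 2 +
        e * (2 ^ (-(j:ℤ))) ^ 2 * (3 * k ^ 2 + 3 * k + 1) / 3 := by
  rw [cellAvg, integral_quadratic, zpow_neg, zpow_natCast]
  field_simp
  ring

/-- `predictEven v k` and `predictOdd v k` are the predicted fine values `f̂_{2k}` and `f̂_{2k+1}`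
of the coarse sequence `v`. -/
noncomputable def predictEven (v : ℤ → ℝ) (k : ℤ) : ℝ :=
  v k + 1 / 8 * (v (k - 1) - v (k + 1))

noncomputable def predictOdd (v : ℤ → ℝ) (k : ℤ) : ℝ :=
  v k + 1 / 8 * (v (k + 1) - v (k - 1))

theorem cellAvg_quadratic_eq_predict (a b e : ℝ) (j : ℕ) (k : ℤ) :
    cellAvg (fun x => a + b * x + e * x ^ 2) (j + 1) (2 * k) =
        predictEven (cellAvg (fun x => a + b * x + e * x ^ 2) j) k ∧
      cellAvg (fun x => a + b * x + e * x ^ 2) (j + 1) (2 * k + 1) =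
        predictOdd (cellAvg (fun x => a + b * x + e * x ^ 2) j) k := by
  have hstep : (2:ℝ) ^ (-((j + 1 : ℕ) : ℤ)) = 2 ^ (-(j:ℤ)) / 2 := by
    rw [Nat.cast_succ, neg_add, zpow_add₀ two_ne_zero, zpow_neg_one, div_eq_mul_inv]
  constructor <;>
  · simp only [predictEven, predictOdd, cellAvg_quadratic, hstep]
    push_cast
    ring

theorem abs_cellAvg_sub_taylor_le {n : ℕ} {g : ℝ → ℝ} {K c r : ℝ} (hg : ContDiff ℝ n g)
    (hK : ∀ t, |iteratedDeriv n g t| ≤ K) {j : ℕ} {m : ℤ}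
    (hl : c - r ≤ 2 ^ (-(j:ℤ)) * m) (hr : 2 ^ (-(j:ℤ)) * (m + 1) ≤ c + r) :
    |cellAvg (fun x => g x - ∑ i ∈ Finset.range n, iteratedDeriv i g c * (x - c) ^ i / i !)
      j m| ≤ K * r ^ n := by
  have hK0 : 0 ≤ K := (abs_nonneg _).trans (hK 0)
  refine abs_cellAvg_le fun x hx => (abs_sub_taylor_le_mul_pow hg hK c x).trans ?_
  have hxc : |x - c| ≤ r := abs_le.2 ⟨by linarith [hx.1], by linarith [hx.2]⟩
  gcongr

theorem abs_cellAvg_sub_predict_le {g : ℝ → ℝ} {K : ℝ} (hg : ContDiff ℝ 3 g)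
    (hK : ∀ t, |iteratedDeriv 3 g t| ≤ K) (k : ℤ) :
    |cellAvg g 1 (2 * k) - predictEven (cellAvg g 0) k| ≤ 18 * K ∧
      |cellAvg g 1 (2 * k + 1) - predictOdd (cellAvg g 0) k| ≤ 18 * K := by
  set c : ℝ := (k : ℝ)
  set d : ℕ → ℝ := fun i => iteratedDeriv i g c
  set q : ℝ → ℝ := fun x => ∑ i ∈ Finset.range 3, d i * (x - c) ^ i / (i !)
  have hq : q = fun x =>
      (d 0 - d 1 * c + d 2 * c ^ 2 / 2) + (d 1 - d 2 * c) * x + d 2 / 2 * x ^ 2 := by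
    funext x; simp [q, Finset.sum_range_succ]; ring
  obtain ⟨hqe, hqo⟩ :=
    cellAvg_quadratic_eq_predict (d 0 - d 1 * c + d 2 * c ^ 2 / 2) (d 1 - d 2 * c) (d 2 / 2) 0 k
  rw [← hq] at hqe hqo
  have hsplit : ∀ (i : ℕ) (m : ℤ),
      cellAvg g i m = cellAvg (fun x => g x - q x) i m + cellAvg q i m := by
    intro i m
    rw [cellAvg_sub hg.continuous (by fun_prop)]
    ring
  have hnear : ∀ (i : ℕ) (m : ℤ),
      c - 2 ≤ 2 ^ (-(i:ℤ)) * m → 2 ^ (-(i:ℤ)) * (m + 1) ≤ c + 2 →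
      |cellAvg (fun x => g x - q x) i m| ≤ K * 2 ^ 3 :=
    fun _ _ => abs_cellAvg_sub_taylor_le hg hK
  have b1 := abs_le.1 (hnear 1 (2 * k) (by norm_num [c]; linarith) (by norm_num [c]; linarith))
  have b2 :=
    abs_le.1 (hnear 1 (2 * k + 1) (by norm_num [c]; linarith) (by norm_num [c]; linarith))
  have b3 := abs_le.1 (hnear 0 k (by norm_num [c]) (by norm_num [c]))
  have b4 := abs_le.1 (hnear 0 (k - 1) (by norm_num [c]; linarith) (by norm_num [c]))
  have b5 := abs_le.1 (hnear 0 (k + 1) (by norm_num [c]; linarith) (by norm_num [c]; linarith))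
  simp only [predictEven, predictOdd] at hqe hqo ⊢
  simp only [hsplit, hqe, hqo]
  -- The remainder averages are at most `8 K` and enter with total weight `1 + 1 + 1/8 + 1/8`.
  constructor <;> refine abs_le.2 ⟨?_, ?_⟩ <;> linarith

/-- Third-order decay of the details of the third-order prediction applied to
the dyadic cell averages of a thrice continuously differentiable function with
bounded third derivative. -/
theorem detail_decay_third_order :
    ∃ C > (0:ℝ), ∀ (f : ℝ → ℝ) (M : ℝ), ContDiff ℝ 3 f →
      (∀ x, |iteratedDeriv 3 f x| ≤ M) → ∀ (j : ℕ) (k : ℤ),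
      |cellAvg f (j + 1) (2 * k) -
          (cellAvg f j k + (1/8) * (cellAvg f j (k - 1) - cellAvg f j (k + 1)))| ≤
        C * M * (2:ℝ) ^ (-(3 * j : ℤ)) ∧
      |cellAvg f (j + 1) (2 * k + 1) -
          (cellAvg f j k + (1/8) * (cellAvg f j (k + 1) - cellAvg f j (k - 1)))| ≤
        C * M * (2:ℝ) ^ (-(3 * j : ℤ)) := by
  refine ⟨18, by norm_num, fun f M hf hM j k => ?_⟩
  set h : ℝ := 2 ^ (-(j:ℤ))
  have hscaled : ContDiff ℝ 3 (fun t => f (h * t)) := hf.comp (contDiff_const.mul contDiff_id)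
  have hscaledM : ∀ t, |iteratedDeriv 3 (fun t => f (h * t)) t| ≤ M * 2 ^ (-(3 * j : ℤ)) := by
    intro t
    rw [iteratedDeriv_comp_const_mul hf, abs_mul, abs_of_pos (by positivity)]
    calc h ^ 3 * |iteratedDeriv 3 f (h * t)| ≤ h ^ 3 * M := by gcongr; exact hM _
      _ = M * 2 ^ (-(3 * j : ℤ)) := by
        rw [mul_comm, ← zpow_natCast, ← zpow_mul]; push_cast; ring_nf
  have hfine : cellAvg f (j + 1) = cellAvg (fun t => f (h * t)) 1 :=
    funext fun m => (cellAvg_comp_two_zpow_mul f j 1 m).symm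
  have hcoarse : cellAvg f j = cellAvg (fun t => f (h * t)) 0 :=
    funext fun m => (cellAvg_comp_two_zpow_mul f j 0 m).symm
  rw [hfine, hcoarse, mul_assoc]
  exact abs_cellAvg_sub_predict_le hscaled hscaledM k
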